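/- arXiv:2308.11293 — 4 statements merged into one kernel-verified Lean document; each statement's English description precedes it below -/
import Mathlib

section
/- Let T ≥ 1 be an integer and let θ : ℤ → ℝ satisfy θ(t+T) = θ(t) for all t ∈ ℤ and θ(v) ≠ 0 for all v ∈ ℤ. Define g(t,0) = 1 and g(t,j) = ∏_{i=0}^{j−1} θ(t−i) for j ≥ 1, and set P = θ(1)θ(2)⋯θ(T). Then for every t ∈ ℤ the series ∑_{j=0}^∞ |g(t,j)| converges if and only if |P| < 1. -/
/-!
Put `p j = ∏_{i<j} θ(t - i)`. As `i ↦ θ(t - i)` has period `T`, cutting the product into blocks of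
length `T` gives `p (qT + r) = P^q · p r`, since a periodic function has the same product `P` over
every full period. Along `j = qT` the series is thus geometric with ratio `|P|`, which forces
`|P| < 1`; conversely, for `|P| < 1` it is the product of that geometric series with the finite
sum of the `|p r|`, `r < T`.
-/
open Finset Function

section Periodic

variable {M : Type*} [CommMonoid M]

theorem Function.Periodic.prod_range_mul_add {f : ℕ → M} {T : ℕ} (hf : Periodic f T)
    (q r : ℕ) : ∏ i ∈ range (q * T + r), f i = (∏ i ∈ range T, f i) ^ q * ∏ i ∈ range r, f i := by
  induction q with
  | zero => simp
  | succ q ih =>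
    have hshift : ∀ i, f (T + i) = f i := fun i => by rw [add_comm]; exact hf i
    rw [show (q + 1) * T + r = T + (q * T + r) by ring, prod_range_add]
    simp only [hshift, ih, pow_succ', mul_assoc]

theorem Function.Periodic.prod_range_sub_eq {θ : ℤ → M} {T : ℕ} (hθ : Periodic θ T)
    (a b : ℤ) : ∏ i ∈ range T, θ (a - i) = ∏ i ∈ range T, θ (b - i) := by
  have hstep : Periodic (fun a : ℤ => ∏ i ∈ range T, θ (a - i)) 1 := by
    intro a
    cases T with
    | zero => simp
    | succ n =>
      have hwrap : θ (a - n) = θ (a + 1) := by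
        rw [← hθ (a - n)]; congr 1; push_cast; ring
      dsimp only
      rw [prod_range_succ', prod_range_succ, hwrap]
      congr 1
      · exact prod_congr rfl fun i _ => congrArg θ (by push_cast; ring)
      · simp
  simpa using ((hstep.int_mul (b - a)) a).symm

end Periodic

theorem Function.Periodic.summable_norm_prod_range_iff {𝕜 : Type*} [NormedField 𝕜] {f : ℕ → 𝕜} {T : ℕ}
    (hf : Periodic f T) (hT : 0 < T) :
    Summable (fun j => ‖∏ i ∈ range j, f i‖) ↔ ‖∏ i ∈ range T, f i‖ < 1 := by
  have : NeZero T := ⟨hT.ne'⟩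
  have hblock := hf.prod_range_mul_add
  set P := ∏ i ∈ range T, f i
  constructor
  · intro hsum
    have hgeom : Summable (fun q : ℕ => ‖P‖ ^ q) := by
      refine (hsum.comp_injective (mul_left_injective₀ hT.ne')).congr fun q => ?_
      have hq := hblock q 0
      rw [add_zero, prod_range_zero, mul_one] at hq
      simp only [comp_apply, hq, norm_pow]
    simpa using summable_geometric_iff_norm_lt_one.mp hgeom
  · intro hP
    rw [← (Nat.divModEquiv T).symm.summable_iff]
    have hprod : Summable (fun x : ℕ × Fin T => ‖P ^ x.1 * ∏ i ∈ range x.2, f i‖) :=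
      Summable.mul_norm (f := (P ^ ·)) (g := fun r : Fin T => ∏ i ∈ range r, f i)
        (summable_norm_geometric_of_norm_lt_one hP) Summable.of_finite
    refine hprod.congr fun x => ?_
    rw [comp_apply, Nat.divModEquiv_symm_apply, hblock]

theorem scalar_transition_abs_summable_iff_general (T : ℕ) (hT : 1 ≤ T) (θ : ℤ → ℝ)
    (hper : ∀ t : ℤ, θ (t + T) = θ t)
    (g : ℤ → ℕ → ℝ)
    (hg : ∀ (t : ℤ) (j : ℕ), g t j = ∏ i ∈ Finset.range j, θ (t - i))
    (P : ℝ) (hP : P = ∏ i ∈ Finset.range T, θ (i + 1)) :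
    ∀ t : ℤ, Summable (fun j : ℕ => |g t j|) ↔ |P| < 1 := by
  intro t
  have hθ : Periodic θ T := hper
  have hf : Periodic (fun i : ℕ => θ (t - i)) T := fun i => by
    simpa using hθ.const_sub t i
  have hP_eq : P = ∏ i ∈ range T, θ (t - i) := by
    rw [hθ.prod_range_sub_eq t T, hP, ← prod_range_reflect]
    refine prod_congr rfl fun i hi => congrArg θ ?_
    have : i < T := mem_range.mp hi
    omega
  simp only [hg, hP_eq, ← Real.norm_eq_abs]
  exact hf.summable_norm_prod_range_iff hT

/-- For `θ : ℤ → ℝ` periodic with period `T` and nowhere zero, with transition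
products `g(t,j) = ∏_{i=0}^{j-1} θ(t-i)` and per-period product `P = θ(1)⋯θ(T)`, the series
`∑_{j=0}^∞ |g(t,j)|` converges if and only if `|P| < 1`. -/
theorem scalar_transition_abs_summable_iff (T : ℕ) (hT : 1 ≤ T) (θ : ℤ → ℝ)
    (hper : ∀ t : ℤ, θ (t + T) = θ t)
    (hne : ∀ v : ℤ, θ v ≠ 0)
    (g : ℤ → ℕ → ℝ)
    (hg : ∀ (t : ℤ) (j : ℕ), g t j = ∏ i ∈ Finset.range j, θ (t - i))
    (P : ℝ) (hP : P = ∏ i ∈ Finset.range T, θ (i + 1)) :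
    ∀ t : ℤ, Summable (fun j : ℕ => |g t j|) ↔ |P| < 1 :=
  scalar_transition_abs_summable_iff_general T hT θ hper g hg P hP
end

section
/- Let T ≥ 1 be an integer, let 1 < α ≤ 2, and let θ_r, θ_l : ℤ → ℝ satisfy θ_r(t+T) = θ_r(t) and θ_l(t+T) = θ_l(t) for all t ∈ ℤ. Define g_r(t,0) = g_l(t,0) = 1, g_r(t,j) = ∏_{i=0}^{j−1} θ_r(t−i) and g_l(t,j) = ∏_{i=0}^{j−1} θ_l(t−i) for j ≥ 1, and set P_r = θ_r(1)⋯θ_r(T), P_l = θ_l(1)⋯θ_l(T). If |P_r| < 1 and |P_l| < 1, then for every t ∈ ℤ the series ∑_{j=0}^∞ (g_l(t,j))^{⟨α−1⟩} g_r(t,j) converges absolutely and ∑_{j=0}^∞ (g_l(t,j))^{⟨α−1⟩} g_r(t,j) = (1 / (1 − P_l^{⟨α−1⟩} P_r)) · ∑_{k=0}^{T−1} (g_l(t,k))^{⟨α−1⟩} g_r(t,k), where in particular |P_l^{⟨α−1⟩} P_r| < 1 so the right-hand side is well defined. -/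
/-- The signed power `x^{⟨a⟩} = |x|^a · sign(x)`. -/
noncomputable def signedPow (x a : ℝ) : ℝ := |x| ^ a * Real.sign x

/-!
By periodicity the product of `θ` over any `T` consecutive integers is the period product `P`, so
`g(t, j + T) = g(t, j) · P`. The signed power is multiplicative, hence the summand
`f j = g_l(t, j)^{⟨α-1⟩} g_r(t, j)` satisfies `f (j + T) = q · f j` with `q = P_l^{⟨α-1⟩} P_r`,
and `|q| ≤ |P_l|^{α-1} |P_r| < 1`. The series is therefore geometric in blocks of length `T`:
it converges absolutely, and its sum `S` satisfies `S = ∑_{k<T} f k + q S`.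
-/

open Finset

namespace Real

lemma sign_mul (x y : ℝ) : sign (x * y) = sign x * sign y := by
  rcases lt_trichotomy x 0 with hx | rfl | hx <;>
  rcases lt_trichotomy y 0 with hy | rfl | hy <;>
  simp [sign_of_neg, sign_of_pos, mul_pos_of_neg_of_neg, mul_neg_of_neg_of_pos,
    mul_neg_of_pos_of_neg, *]

lemma abs_sign_le_one (x : ℝ) : |sign x| ≤ 1 := by
  rcases sign_apply_eq x with h | h | h <;> simp [h]

end Real

lemma signedPow_mul (x y a : ℝ) : signedPow (x * y) a = signedPow x a * signedPow y a := by
  rw [signedPow, signedPow, signedPow, abs_mul, Real.mul_rpow (abs_nonneg x) (abs_nonneg y),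
    Real.sign_mul]
  ring

lemma abs_signedPow_le (x a : ℝ) : |signedPow x a| ≤ |x| ^ a := by
  rw [signedPow, abs_mul, abs_of_nonneg (by positivity)]
  exact mul_le_of_le_one_right (by positivity) (Real.abs_sign_le_one x)

lemma abs_signedPow_mul_lt_one {x y a : ℝ} (ha : 0 ≤ a) (hx : |x| ≤ 1) (hy : |y| < 1) :
    |signedPow x a * y| < 1 := by
  have hxa : |signedPow x a| ≤ 1 :=
    (abs_signedPow_le x a).trans (Real.rpow_le_one (abs_nonneg x) hx ha)
  rw [abs_mul]
  exact (mul_le_of_le_one_left (abs_nonneg y) hxa).trans_lt hy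

namespace Function.Periodic

variable {M : Type*} [CommMonoid M] {θ : ℤ → M} {T : ℕ}

lemma prod_range_add_one_sub (h : Periodic θ T) (s : ℤ) :
    ∏ i ∈ range T, θ (s + 1 - i) = ∏ i ∈ range T, θ (s - i) := by
  obtain _ | m := T
  · simp
  have hlast : θ (s - m) = θ (s + 1) := by
    rw [← h (s - m)]
    push_cast
    ring_nf
  rw [prod_range_succ', prod_range_succ, hlast, Nat.cast_zero, sub_zero]
  congr 1
  refine prod_congr rfl fun i _ => ?_
  push_cast
  ring_nf

lemma prod_range_sub_eq_prod_range_add_one (h : Periodic θ T) (s : ℤ) :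
    ∏ i ∈ range T, θ (s - i) = ∏ i ∈ range T, θ (i + 1) := by
  have hF : Periodic (fun s : ℤ => ∏ i ∈ range T, θ (s - i)) 1 := h.prod_range_add_one_sub
  calc ∏ i ∈ range T, θ (s - i) = ∏ i ∈ range T, θ (T - i) := by
        simpa using (hF.int_mul_eq s).trans (hF.int_mul_eq T).symm
    _ = ∏ i ∈ range T, θ (i + 1) := by
        rw [← prod_range_reflect]
        refine prod_congr rfl fun i hi => congrArg θ ?_
        have := mem_range.mp hi
        omega

lemma prod_range_add_period (h : Periodic θ T) (t : ℤ) (j : ℕ) :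
    ∏ i ∈ range (j + T), θ (t - i)
      = (∏ i ∈ range j, θ (t - i)) * ∏ i ∈ range T, θ (i + 1) := by
  rw [prod_range_add, ← h.prod_range_sub_eq_prod_range_add_one (t - j)]
  push_cast
  simp only [sub_sub]

end Function.Periodic

section BlockGeometric

variable {𝕜 : Type*} [NormedDivisionRing 𝕜] {f : ℕ → 𝕜} {T : ℕ} {q : 𝕜}

lemma eq_pow_mul_of_add_period_eq_mul (hf : ∀ j, f (j + T) = q * f j) (m k : ℕ) :
    f (m * T + k) = q ^ m * f k := by
  induction m with
  | zero => simp
  | succ m ih => rw [add_mul, one_mul, add_right_comm, hf, ih, pow_succ', mul_assoc]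

lemma summable_norm_of_add_period_eq_mul (hT : 0 < T) (hq : ‖q‖ < 1)
    (hf : ∀ j, f (j + T) = q * f j) : Summable (fun j => ‖f j‖) := by
  have : NeZero T := ⟨hT.ne'⟩
  have hblocks : Summable (fun p : ℕ × Fin T => ‖q‖ ^ p.1 * ‖f p.2‖) :=
    (summable_geometric_of_lt_one (norm_nonneg q) hq).mul_of_nonneg
      (Summable.of_finite (f := fun k : Fin T => ‖f k‖)) (fun _ => by positivity)
      (fun _ => norm_nonneg _)
  rw [← (Nat.divModEquiv T).symm.summable_iff]
  refine hblocks.congr fun p => ?_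
  simp [Nat.divModEquiv, eq_pow_mul_of_add_period_eq_mul hf, norm_mul, norm_pow]

lemma tsum_eq_of_add_period_eq_mul [CompleteSpace 𝕜] (hT : 0 < T) (hq : ‖q‖ < 1)
    (hf : ∀ j, f (j + T) = q * f j) : ∑' j, f j = (1 - q)⁻¹ * ∑ k ∈ range T, f k := by
  have hsum : Summable f := (summable_norm_of_add_period_eq_mul hT hq hf).of_norm
  have hq1 : 1 - q ≠ 0 := sub_ne_zero.mpr fun h => by simp [← h] at hq
  have hsplit : ∑ k ∈ range T, f k + q * ∑' j, f j = ∑' j, f j := by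
    simpa only [hf, tsum_mul_left] using hsum.sum_add_tsum_nat_add T
  rw [eq_inv_mul_iff_mul_eq₀ hq1, sub_mul, one_mul, sub_eq_iff_eq_add]
  exact hsplit.symm

end BlockGeometric

theorem crosscovariation_series_closed_form_general (T : ℕ) (hT : 1 ≤ T)
    (α : ℝ) (hα1 : 1 < α)
    (θr θl : ℤ → ℝ)
    (hperr : ∀ t : ℤ, θr (t + T) = θr t)
    (hperl : ∀ t : ℤ, θl (t + T) = θl t)
    (gr gl : ℤ → ℕ → ℝ)
    (hgr : ∀ (t : ℤ) (j : ℕ), gr t j = ∏ i ∈ Finset.range j, θr (t - i))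
    (hgl : ∀ (t : ℤ) (j : ℕ), gl t j = ∏ i ∈ Finset.range j, θl (t - i))
    (Pr Pl : ℝ)
    (hPr : Pr = ∏ i ∈ Finset.range T, θr (i + 1))
    (hPl : Pl = ∏ i ∈ Finset.range T, θl (i + 1))
    (hPrlt : |Pr| < 1) (hPllt : |Pl| < 1) :
    |signedPow Pl (α - 1) * Pr| < 1 ∧
      ∀ t : ℤ,
        Summable (fun j : ℕ => |signedPow (gl t j) (α - 1) * gr t j|) ∧
        ∑' j : ℕ, signedPow (gl t j) (α - 1) * gr t j
          = (1 / (1 - signedPow Pl (α - 1) * Pr))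
            * ∑ k ∈ Finset.range T, signedPow (gl t k) (α - 1) * gr t k := by
  have hq : |signedPow Pl (α - 1) * Pr| < 1 :=
    abs_signedPow_mul_lt_one (by linarith) hPllt.le hPrlt
  refine ⟨hq, fun t => ?_⟩
  set f : ℕ → ℝ := fun j => signedPow (gl t j) (α - 1) * gr t j
  have hrec : ∀ j, f (j + T) = signedPow Pl (α - 1) * Pr * f j := by
    intro j
    simp only [f]
    rw [hgl, hgl, hgr, hgr, Function.Periodic.prod_range_add_period hperl,
      Function.Periodic.prod_range_add_period hperr, ← hPl, ← hPr, signedPow_mul]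
    ring
  rw [← Real.norm_eq_abs] at hq
  simp only [← Real.norm_eq_abs, one_div]
  exact ⟨summable_norm_of_add_period_eq_mul hT hq hrec,
    tsum_eq_of_add_period_eq_mul hT hq hrec⟩

/-- For periodic `θ_r, θ_l : ℤ → ℝ` with per-period products `P_r, P_l` of
absolute value less than one, the series `∑_j (g_l(t,j))^{⟨α-1⟩} g_r(t,j)` converges
absolutely, with sum `(1/(1 - P_l^{⟨α-1⟩} P_r)) · ∑_{k=0}^{T-1} (g_l(t,k))^{⟨α-1⟩} g_r(t,k)`;
in particular `|P_l^{⟨α-1⟩} P_r| < 1`. -/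
theorem crosscovariation_series_closed_form (T : ℕ) (hT : 1 ≤ T)
    (α : ℝ) (hα1 : 1 < α) (hα2 : α ≤ 2)
    (θr θl : ℤ → ℝ)
    (hperr : ∀ t : ℤ, θr (t + T) = θr t)
    (hperl : ∀ t : ℤ, θl (t + T) = θl t)
    (gr gl : ℤ → ℕ → ℝ)
    (hgr : ∀ (t : ℤ) (j : ℕ), gr t j = ∏ i ∈ Finset.range j, θr (t - i))
    (hgl : ∀ (t : ℤ) (j : ℕ), gl t j = ∏ i ∈ Finset.range j, θl (t - i))
    (Pr Pl : ℝ)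
    (hPr : Pr = ∏ i ∈ Finset.range T, θr (i + 1))
    (hPl : Pl = ∏ i ∈ Finset.range T, θl (i + 1))
    (hPrlt : |Pr| < 1) (hPllt : |Pl| < 1) :
    |signedPow Pl (α - 1) * Pr| < 1 ∧
      ∀ t : ℤ,
        Summable (fun j : ℕ => |signedPow (gl t j) (α - 1) * gr t j|) ∧
        ∑' j : ℕ, signedPow (gl t j) (α - 1) * gr t j
          = (1 / (1 - signedPow Pl (α - 1) * Pr))
            * ∑ k ∈ Finset.range T, signedPow (gl t k) (α - 1) * gr t k :=
  crosscovariation_series_closed_form_general T hT α hα1 θr θl hperr hperl gr gl hgr hgl Pr Pl hPr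
    hPl hPrlt hPllt
end

section
/- Let (Ω, F, ℙ) be a probability space, let m ≥ 1, let Θ be an m×m real matrix, and let W, Z : Ω → ℝ^m be random vectors such that each component of W and each component of Z is integrable, Z is independent of W, E[Z_r] = 0 for every r, and E[|W_l|] > 0 for every l ∈ {1,…,m}. Define Y = Θ W + Z, and define the m×m normalized covariation matrices N^{Y,W} and N^{W,W} by N^{Y,W}_{r,l} = E[Y_r · sign(W_l)] / E[|W_l|] and N^{W,W}_{r,l} = E[W_r · sign(W_l)] / E[|W_l|]. Then N^{Y,W} = Θ · N^{W,W} as m×m matrices; moreover, the diagonal entries of N^{W,W} all equal 1. -/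
/-!
Row `r` of `Y = Θ W + Z` is `Y_r = ∑ₖ Θ_rk W_k + Z_r`, and `NCV(·, W_l)` is linear in its first
argument, so `NCV(Y_r, W_l) = ∑ₖ Θ_rk NCV(W_k, W_l) + NCV(Z_r, W_l)`. The last term vanishes
because `Z_r` is centred and independent of `sign W_l`, so `E[Z_r sign W_l] = E[Z_r] E[sign W_l]`.
The diagonal is `1` because `W_l sign W_l = |W_l|`.
-/

open MeasureTheory ProbabilityTheory

namespace Real

theorem measurable_sign : Measurable Real.sign :=
  Measurable.ite measurableSet_Iio measurable_const
    (Measurable.ite measurableSet_Ioi measurable_const measurable_const)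

theorem norm_sign_le_one (x : ℝ) : ‖Real.sign x‖ ≤ 1 := by
  rcases Real.sign_apply_eq x with h | h | h <;> simp [h]

theorem self_mul_sign (x : ℝ) : x * Real.sign x = |x| := by
  rcases lt_trichotomy x 0 with h | rfl | h
  · rw [Real.sign_of_neg h, abs_of_neg h, mul_neg_one]
  · simp
  · rw [Real.sign_of_pos h, abs_of_pos h, mul_one]

end Real

section

variable {Ω : Type*} [MeasurableSpace Ω] {μ : Measure Ω}

theorem MeasureTheory.Integrable.mul_sign {U V : Ω → ℝ} (hU : Integrable U μ)
    (hV : AEMeasurable V μ) : Integrable (fun ω => U ω * Real.sign (V ω)) μ :=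
  hU.mul_bdd (Real.measurable_sign.comp_aemeasurable hV).aestronglyMeasurable
    (Filter.Eventually.of_forall fun ω => Real.norm_sign_le_one (V ω))

namespace ProbabilityTheory

/-- The paper's `NCV(U, V)` with `q = 1`. -/
noncomputable def normCovariation (μ : Measure Ω) (U V : Ω → ℝ) : ℝ :=
  (∫ ω, U ω * Real.sign (V ω) ∂μ) / ∫ ω, |V ω| ∂μ

theorem normCovariation_self {V : Ω → ℝ} (hV : ∫ ω, |V ω| ∂μ ≠ 0) :
    normCovariation μ V V = 1 := by
  simp only [normCovariation, Real.self_mul_sign, div_self hV]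

theorem normCovariation_add {U₁ U₂ V : Ω → ℝ} (hU₁ : Integrable U₁ μ) (hU₂ : Integrable U₂ μ)
    (hV : AEMeasurable V μ) :
    normCovariation μ (fun ω => U₁ ω + U₂ ω) V =
      normCovariation μ U₁ V + normCovariation μ U₂ V := by
  simp only [normCovariation, add_mul, integral_add (hU₁.mul_sign hV) (hU₂.mul_sign hV), add_div]

theorem normCovariation_dotProduct {ι : Type*} [Fintype ι] (c : ι → ℝ) {U : Ω → ι → ℝ}
    {V : Ω → ℝ} (hU : ∀ k, Integrable (fun ω => U ω k) μ) (hV : AEMeasurable V μ) :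
    normCovariation μ (fun ω => c ⬝ᵥ U ω) V =
      ∑ k, c k * normCovariation μ (fun ω => U ω k) V := by
  simp only [normCovariation, dotProduct, Finset.sum_mul, mul_assoc,
    integral_finsetSum _ fun k _ => ((hU k).mul_sign hV).const_mul (c k), integral_const_mul,
    Finset.sum_div, mul_div_assoc]

theorem IndepFun.normCovariation_eq_zero {U V : Ω → ℝ} (hUV : IndepFun U V μ)
    (hU : AEStronglyMeasurable U μ) (hV : AEMeasurable V μ) (hU₀ : ∫ ω, U ω ∂μ = 0) :
    normCovariation μ U V = 0 := by
  have hsign : IndepFun U (fun ω => Real.sign (V ω)) μ :=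
    hUV.comp measurable_id Real.measurable_sign
  have hprod := hsign.integral_mul_eq_mul_integral hU
    (Real.measurable_sign.comp_aemeasurable hV).aestronglyMeasurable
  simp only [Pi.mul_apply, hU₀, zero_mul] at hprod
  simp only [normCovariation, hprod, zero_div]

end ProbabilityTheory

end

theorem yule_walker_normalized_covariation_general
    {Ω : Type*} [MeasureSpace Ω]
    (m : ℕ) (Θ : Matrix (Fin m) (Fin m) ℝ)
    (W Z : Ω → Fin m → ℝ)
    (hWint : ∀ k : Fin m, Integrable (fun ω => W ω k))
    (hZint : ∀ r : Fin m, Integrable (fun ω => Z ω r))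
    (hindep : IndepFun Z W)
    (hZmean : ∀ r : Fin m, ∫ ω, Z ω r = 0)
    (hWpos : ∀ l : Fin m, 0 < ∫ ω, |W ω l|)
    (Y : Ω → Fin m → ℝ) (hY : ∀ ω, Y ω = Θ.mulVec (W ω) + Z ω)
    (NYW NWW : Matrix (Fin m) (Fin m) ℝ)
    (hNYW : ∀ r l : Fin m,
      NYW r l = (∫ ω, Y ω r * Real.sign (W ω l)) / ∫ ω, |W ω l|)
    (hNWW : ∀ r l : Fin m,
      NWW r l = (∫ ω, W ω r * Real.sign (W ω l)) / ∫ ω, |W ω l|) :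
    NYW = Θ * NWW ∧ ∀ l : Fin m, NWW l l = 1 := by
  have hWl (l : Fin m) : AEMeasurable (fun ω => W ω l) := (hWint l).aemeasurable
  have hZW (r l : Fin m) : IndepFun (fun ω => Z ω r) (fun ω => W ω l) :=
    hindep.comp (measurable_pi_apply r) (measurable_pi_apply l)
  refine ⟨Matrix.ext fun r l => ?_, fun l => (hNWW l l).trans (normCovariation_self (hWpos l).ne')⟩
  have hYr : (fun ω => Y ω r) = fun ω => Θ r ⬝ᵥ W ω + Z ω r := funext fun ω => by
    rw [hY ω]; rfl
  have hΘW : Integrable (fun ω => Θ r ⬝ᵥ W ω) :=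
    integrable_finsetSum _ fun k _ => (hWint k).const_mul (Θ r k)
  calc NYW r l = normCovariation volume (fun ω => Θ r ⬝ᵥ W ω + Z ω r) (fun ω => W ω l) := by
        rw [hNYW, ← hYr]; rfl
    _ = ∑ k, Θ r k * NWW k l := by
        rw [normCovariation_add hΘW (hZint r) (hWl l), normCovariation_dotProduct _ hWint (hWl l),
          (hZW r l).normCovariation_eq_zero (hZint r).aestronglyMeasurable (hWl l) (hZmean r),
          add_zero]
        exact Finset.sum_congr rfl fun k _ => by rw [hNWW]; rfl

/-- Normalized Yule–Walker equations. If `Y = Θ W + Z` with `Z` independent of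
`W`, all components integrable, `E[Z_r] = 0` and `E[|W_l|] > 0`, then the normalized
covariation matrices `N^{Y,W}_{r,l} = E[Y_r sign(W_l)]/E[|W_l|]` and
`N^{W,W}_{r,l} = E[W_r sign(W_l)]/E[|W_l|]` satisfy `N^{Y,W} = Θ · N^{W,W}`, and all diagonal
entries of `N^{W,W}` equal `1`. -/
theorem yule_walker_normalized_covariation
    {Ω : Type*} [MeasureSpace Ω] [IsProbabilityMeasure (ℙ : Measure Ω)]
    (m : ℕ) (hm : 1 ≤ m) (Θ : Matrix (Fin m) (Fin m) ℝ)
    (W Z : Ω → Fin m → ℝ) (hWm : Measurable W) (hZm : Measurable Z)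
    (hWint : ∀ k : Fin m, Integrable (fun ω => W ω k))
    (hZint : ∀ r : Fin m, Integrable (fun ω => Z ω r))
    (hindep : IndepFun Z W)
    (hZmean : ∀ r : Fin m, ∫ ω, Z ω r = 0)
    (hWpos : ∀ l : Fin m, 0 < ∫ ω, |W ω l|)
    (Y : Ω → Fin m → ℝ) (hY : ∀ ω, Y ω = Θ.mulVec (W ω) + Z ω)
    (NYW NWW : Matrix (Fin m) (Fin m) ℝ)
    (hNYW : ∀ r l : Fin m,
      NYW r l = (∫ ω, Y ω r * Real.sign (W ω l)) / ∫ ω, |W ω l|)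
    (hNWW : ∀ r l : Fin m,
      NWW r l = (∫ ω, W ω r * Real.sign (W ω l)) / ∫ ω, |W ω l|) :
    NYW = Θ * NWW ∧ ∀ l : Fin m, NWW l l = 1 :=
  yule_walker_normalized_covariation_general m Θ W Z hWint hZint hindep hZmean hWpos Y hY NYW NWW
    hNYW hNWW
end

section
/- Let m ≥ 1, let T ≥ 1 be an integer, let Θ : ℤ → (m×m real matrices) be periodic with period T, and let z : ℤ → ℝ^m. Define g(t,0) = I and g(t,j) = Θ(t)Θ(t−1)⋯Θ(t−j+1) for j ≥ 1. Suppose that for every t ∈ ℤ and every pair of indices r, l ∈ {1,…,m} one has ∑_{j=0}^∞ |g_{r,l}(t,j)| < ∞, where g_{r,l}(t,j) denotes the (r,l) entry of g(t,j), and suppose the sequence (z(t))_{t∈ℤ} is bounded, i.e. there exists C ≥ 0 with |z_l(t)| ≤ C for all t ∈ ℤ and l ∈ {1,…,m}. Then for every t ∈ ℤ the series ∑_{j=0}^∞ g(t,j) z(t−j) converges absolutely in each component, and the resulting function x(t) = ∑_{j=0}^∞ g(t,j) z(t−j) is a bounded solution of x(t) = Θ(t) x(t−1) + z(t) for all t ∈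 ℤ, with sup_{t∈ℤ} max_r |x_r(t)| ≤ C · m · sup_{t∈ℤ} max_{r,l} ∑_{j=0}^∞ |g_{r,l}(t,j)| < ∞. -/
/-!
Each entry of `g(t,j) z(t-j)` is dominated by `C ∑_l |g_{r,l}(t,j)|`, which gives absolute
convergence and the bound. The recursion comes from splitting off the term `j = 0` and pulling
`Θ(t)` out of the tail, as `g(t,j+1) = Θ(t) g(t-1,j)`. The supremum in the bound is finite because
`g`, hence each entrywise series, is `T`-periodic in `t` and so takes finitely many values.
-/

open Function Matrix

theorem Function.Periodic.finite_range_of_int {α : Type*} {f : ℤ → α} {c : ℤ}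
    (h : Periodic f c) (hc : 0 < c) : (Set.range f).Finite :=
  ((Set.finite_Ico 0 c).image f).subset <| by
    rintro _ ⟨x, rfl⟩
    obtain ⟨y, hy, hxy⟩ := h.exists_mem_Ico₀ hc x
    exact ⟨y, hy, hxy.symm⟩

theorem transition_periodic {M : Type*} [Monoid M] {Θ : ℤ → M} {g : ℤ → ℕ → M} {c : ℤ}
    (hper : Periodic Θ c) (hg0 : ∀ t, g t 0 = 1)
    (hgs : ∀ t j, g t (j + 1) = Θ t * g (t - 1) j) (j : ℕ) : Periodic (g · j) c := by
  induction j with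
  | zero => intro t; simp only [hg0]
  | succ j ih =>
    intro t
    show g (t + c) (j + 1) = g t (j + 1)
    rw [hgs, hgs, hper t, ← sub_add_eq_add_sub]
    exact congrArg _ (ih (t - 1))

section Bounds

variable {ι m n : Type*} [Fintype n]

theorem abs_mulVec_apply_le (A : Matrix m n ℝ) {v : n → ℝ} {C : ℝ} (hv : ∀ l, |v l| ≤ C)
    (r : m) : |(A *ᵥ v) r| ≤ C * ∑ l, |A r l| := by
  rw [Finset.mul_sum]
  refine (Finset.abs_sum_le_sum_abs _ _).trans (Finset.sum_le_sum fun l _ => ?_)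
  rw [abs_mul, mul_comm C]
  exact mul_le_mul_of_nonneg_left (hv l) (abs_nonneg _)

variable {A : ι → Matrix m n ℝ} {v : ι → n → ℝ} {C : ℝ} {r : m}

theorem summable_abs_mulVec_apply (hA : ∀ l, Summable fun i => |A i r l|)
    (hv : ∀ i l, |v i l| ≤ C) : Summable fun i => |(A i *ᵥ v i) r| :=
  .of_nonneg_of_le (fun _ => abs_nonneg _) (fun i => abs_mulVec_apply_le _ (hv i) r)
    ((summable_sum fun l _ => hA l).mul_left C)

theorem abs_tsum_mulVec_apply_le (hA : ∀ l, Summable fun i => |A i r l|)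
    (hv : ∀ i l, |v i l| ≤ C) : |∑' i, (A i *ᵥ v i) r| ≤ C * ∑ l, ∑' i, |A i r l| := by
  have hdom : Summable fun i => C * ∑ l, |A i r l| :=
    (summable_sum fun l _ => hA l).mul_left C
  calc |∑' i, (A i *ᵥ v i) r| ≤ ∑' i, |(A i *ᵥ v i) r| :=
        norm_tsum_le_tsum_norm (f := fun i => (A i *ᵥ v i) r) (summable_abs_mulVec_apply hA hv)
    _ ≤ ∑' i, C * ∑ l, |A i r l| :=
        (summable_abs_mulVec_apply hA hv).tsum_le_tsum
          (fun i => abs_mulVec_apply_le _ (hv i) r) hdom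
    _ = C * ∑ l, ∑' i, |A i r l| := by
        rw [tsum_mul_left, Summable.tsum_finsetSum fun l _ => hA l]

end Bounds

theorem tsum_transition_mulVec_eq {R n : Type*} [Fintype n] [DecidableEq n] [CommRing R]
    [TopologicalSpace R] [IsTopologicalRing R] [T2Space R] {Θ : ℤ → Matrix n n R}
    {g : ℤ → ℕ → Matrix n n R} {z : ℤ → n → R} (hg0 : ∀ t, g t 0 = 1)
    (hgs : ∀ t j, g t (j + 1) = Θ t * g (t - 1) j)
    (hsum : ∀ t, Summable fun j : ℕ => g t j *ᵥ z (t - j)) (t : ℤ) :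
    ∑' j : ℕ, g t j *ᵥ z (t - j) = Θ t *ᵥ ∑' j : ℕ, g (t - 1) j *ᵥ z (t - 1 - j) + z t := by
  rw [(hsum t).tsum_eq_zero_add, ← mulVecLin_apply (Θ t),
    (hsum (t - 1)).map_tsum (mulVecLin (Θ t)) (continuous_const.matrix_mulVec continuous_id),
    add_comm]
  simp only [hg0, hgs, one_mulVec, Nat.cast_zero, sub_zero, ← mulVec_mulVec, Nat.cast_succ,
    sub_add_eq_sub_sub_swap, mulVecLin_apply]

theorem par1_bounded_solution_general (m : ℕ) (T : ℕ) (hT : 1 ≤ T)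
    (Θ : ℤ → Matrix (Fin m) (Fin m) ℝ)
    (hper : ∀ t : ℤ, Θ (t + T) = Θ t)
    (z : ℤ → Fin m → ℝ)
    (g : ℤ → ℕ → Matrix (Fin m) (Fin m) ℝ)
    (hg0 : ∀ t : ℤ, g t 0 = 1)
    (hgs : ∀ (t : ℤ) (j : ℕ), g t (j + 1) = Θ t * g (t - 1) j)
    (hgsum : ∀ (t : ℤ) (r l : Fin m), Summable (fun j : ℕ => |g t j r l|))
    (C : ℝ) (hC : 0 ≤ C)
    (hz : ∀ (t : ℤ) (l : Fin m), |z t l| ≤ C) :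
    (∀ (t : ℤ) (r : Fin m),
        Summable (fun j : ℕ => |((g t j).mulVec (z (t - j))) r|)) ∧
      ∀ x : ℤ → Fin m → ℝ,
        (∀ (t : ℤ) (r : Fin m),
            x t r = ∑' j : ℕ, ((g t j).mulVec (z (t - j))) r) →
          (∀ t : ℤ, x t = (Θ t).mulVec (x (t - 1)) + z t) ∧
          (∀ (t : ℤ) (r : Fin m),
            |x t r| ≤ C * m *
              ⨆ t' : ℤ, ⨆ r' : Fin m, ⨆ l' : Fin m, ∑' j : ℕ, |g t' j r' l'|) := by
  have hsum_abs (t : ℤ) (r : Fin m) : Summable fun j : ℕ => |(g t j *ᵥ z (t - j)) r| :=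
    summable_abs_mulVec_apply (hgsum t r) fun _ => hz _
  have hsum (t : ℤ) : Summable fun j : ℕ => g t j *ᵥ z (t - j) :=
    Pi.summable.2 fun r => (hsum_abs t r).of_abs
  refine ⟨hsum_abs, fun x hx => ⟨fun t => ?_, fun t r => ?_⟩⟩
  · obtain rfl : x = fun t => ∑' j : ℕ, g t j *ᵥ z (t - j) := by
      ext t r
      rw [hx, tsum_apply (hsum t)]
    exact tsum_transition_mulVec_eq hg0 hgs hsum t
  · set S : ℤ → Fin m → Fin m → ℝ := fun t r l => ∑' j : ℕ, |g t j r l|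
    have hS_per : Periodic (fun t => ⨆ r, ⨆ l, S t r l) T := fun t => by
      simp only [S, transition_periodic hper hg0 hgs _ t]
    have hS_le (r l : Fin m) : S t r l ≤ ⨆ t', ⨆ r', ⨆ l', S t' r' l' :=
      calc S t r l ≤ ⨆ l', S t r l' := le_ciSup (Set.finite_range _).bddAbove l
        _ ≤ ⨆ r', ⨆ l', S t r' l' :=
          le_ciSup (f := fun r' => ⨆ l', S t r' l') (Set.finite_range _).bddAbove r
        _ ≤ _ := le_ciSup (hS_per.finite_range_of_int (by omega)).bddAbove t
    calc |x t r| ≤ C * ∑ l, S t r l :=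
          hx t r ▸ abs_tsum_mulVec_apply_le (hgsum t r) fun _ => hz _
      _ ≤ C * ∑ _l : Fin m, ⨆ t', ⨆ r', ⨆ l', S t' r' l' := by gcongr with l; exact hS_le r l
      _ = _ := by
          simp only [Finset.sum_const, Finset.card_univ, Fintype.card_fin, nsmul_eq_mul]
          ring

/-- Bounded solution of the multidimensional periodic AR(1) equation. If `Θ` is
`T`-periodic, the transition products `g(t,j)` have absolutely summable entries, and `z` is
bounded by `C`, then `x(t) = ∑_{j=0}^∞ g(t,j) z(t-j)` converges absolutely componentwise,
satisfies `x(t) = Θ(t) x(t-1) + z(t)`, and is bounded: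
`|x_r(t)| ≤ C · m · sup_{t',r',l'} ∑_j |g_{r',l'}(t',j)|`. -/
theorem par1_bounded_solution (m : ℕ) (hm : 1 ≤ m) (T : ℕ) (hT : 1 ≤ T)
    (Θ : ℤ → Matrix (Fin m) (Fin m) ℝ)
    (hper : ∀ t : ℤ, Θ (t + T) = Θ t)
    (z : ℤ → Fin m → ℝ)
    (g : ℤ → ℕ → Matrix (Fin m) (Fin m) ℝ)
    (hg0 : ∀ t : ℤ, g t 0 = 1)
    (hgs : ∀ (t : ℤ) (j : ℕ), g t (j + 1) = Θ t * g (t - 1) j)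
    (hgsum : ∀ (t : ℤ) (r l : Fin m), Summable (fun j : ℕ => |g t j r l|))
    (C : ℝ) (hC : 0 ≤ C)
    (hz : ∀ (t : ℤ) (l : Fin m), |z t l| ≤ C) :
    (∀ (t : ℤ) (r : Fin m),
        Summable (fun j : ℕ => |((g t j).mulVec (z (t - j))) r|)) ∧
      ∀ x : ℤ → Fin m → ℝ,
        (∀ (t : ℤ) (r : Fin m),
            x t r = ∑' j : ℕ, ((g t j).mulVec (z (t - j))) r) →
          (∀ t : ℤ, x t = (Θ t).mulVec (x (t - 1)) + z t) ∧
          (∀ (t : ℤ) (r : Fin m),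
            |x t r| ≤ C * m *
              ⨆ t' : ℤ, ⨆ r' : Fin m, ⨆ l' : Fin m, ∑' j : ℕ, |g t' j r' l'|) :=
  par1_bounded_solution_general m T hT Θ hper z g hg0 hgs hgsum C hC hz
end
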